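/- Let Ω = (a,b) be a bounded open interval and let α ∈ (0, 1/2). Then there exists a constant C > 0 (depending only on α and b−a) such that for every smooth function u compactly supported in Ω (extended by zero to ℝ), ‖ |ω|^{-α} û ‖_{L²(ℝ)} ≤ C ‖u‖_{L²(a,b)}, i.e., L²(Ω) is continuously embedded into H₀^{-α}(Ω). -/

import Mathlib

open MeasureTheory

/-- Fourier transform `û(ω) = ∫ e^{-iωx} u(x) dx`. -/
noncomputable def fourierT (u : ℝ → ℝ) (ω : ℝ) : ℂ :=
  ∫ x : ℝ, Complex.exp (-(Complex.I * ω * x)) * (u x : ℂ)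

/-- The `H^{-α}(ℝ)` norm: `‖u‖_{H^{-α}} = ‖ |ω|^{-α} û ‖_{L²(ℝ)}`. -/
noncomputable def HnegNorm (α : ℝ) (u : ℝ → ℝ) : ℝ :=
  Real.sqrt (∫ ω : ℝ, |ω| ^ (-(2 * α)) * ‖fourierT u ω‖ ^ 2)

open Real Complex
open scoped FourierTransform

lemma aux_fourierT_eq (u : ℝ → ℝ) (ω : ℝ) :
    fourierT u ω = 𝓕 (fun x => (u x : ℂ)) (ω / (2 * π)) := by
  rw [Real.fourier_real_eq_integral_exp_smul]
  unfold fourierT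
  congr 1; ext x
  rw [smul_eq_mul]
  congr 2
  have hπ : (π : ℂ) ≠ 0 := by exact_mod_cast Real.pi_ne_zero
  push_cast
  field_simp

lemma fourierT_norm_le (u : ℝ → ℝ) (ω : ℝ) :
    ‖fourierT u ω‖ ≤ ∫ x : ℝ, |u x| := by
  refine (norm_integral_le_integral_norm _).trans_eq ?_
  congr 1; ext x
  rw [norm_mul]
  have : ‖Complex.exp (-(Complex.I * ω * x))‖ = 1 := by
    rw [Complex.norm_exp]
    simp
  rw [this, one_mul, Complex.norm_real, Real.norm_eq_abs]

lemma plancherel_smooth (v : ℝ → ℂ) (hsm : ContDiff ℝ (⊤:ℕ∞) v) (hcs : HasCompactSupport v) :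
    Integrable (fun ξ : ℝ => ‖𝓕 v ξ‖ ^ 2) ∧
      (∫ ξ : ℝ, ‖𝓕 v ξ‖ ^ 2) = ∫ x : ℝ, ‖v x‖ ^ 2 := by
  have hv_cont : Continuous v := hsm.continuous
  have hv_int : Integrable v := hv_cont.integrable_of_hasCompactSupport hcs
  have hdiff : Differentiable ℝ v := hsm.differentiable (by simp)
  have hd_sm : ContDiff ℝ (⊤:ℕ∞) (deriv v) := (contDiff_infty_iff_deriv.mp hsm).2
  have hd_cs : HasCompactSupport (deriv v) := hcs.deriv
  have hd_int : Integrable (deriv v) := hd_sm.continuous.integrable_of_hasCompactSupport hd_cs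
  have hdd_sm : ContDiff ℝ (⊤:ℕ∞) (deriv (deriv v)) := (contDiff_infty_iff_deriv.mp hd_sm).2
  have hdd_int : Integrable (deriv (deriv v)) :=
    hdd_sm.continuous.integrable_of_hasCompactSupport hd_cs.deriv
  set A := ∫ x : ℝ, ‖v x‖ with hAdef
  set B := ∫ x : ℝ, ‖deriv (deriv v) x‖ with hBdef
  have hA0 : 0 ≤ A := integral_nonneg fun x => norm_nonneg _
  have hB0 : 0 ≤ B := integral_nonneg fun x => norm_nonneg _
  have hA : ∀ ξ : ℝ, ‖𝓕 v ξ‖ ≤ A := fun ξ =>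
    VectorFourier.norm_fourierIntegral_le_integral_norm _ _ _ _ _
  have e1 := Real.fourier_deriv hv_int hdiff hd_int
  have e2 := Real.fourier_deriv hd_int (hd_sm.differentiable (by simp)) hdd_int
  have hB : ∀ ξ : ℝ, (2 * π) ^ 2 * ξ ^ 2 * ‖𝓕 v ξ‖ ≤ B := by
    intro ξ
    have h1 : ‖𝓕 (deriv (deriv v)) ξ‖ ≤ B :=
      VectorFourier.norm_fourierIntegral_le_integral_norm _ _ _ _ _
    have h2 : 𝓕 (deriv (deriv v)) ξ = (2 * π * Complex.I * ξ) • ((2 * π * Complex.I * ξ) • 𝓕 v ξ) := by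
      rw [e2]
      simp only
      rw [congrFun e1 ξ]
    rw [h2] at h1
    have h3 : ‖(2 * ↑π * Complex.I * (ξ:ℂ))‖ = 2 * π * |ξ| := by
      simp [abs_of_pos Real.pi_pos]
    rw [norm_smul, norm_smul, h3] at h1
    calc (2 * π) ^ 2 * ξ ^ 2 * ‖𝓕 v ξ‖ = 2 * π * |ξ| * (2 * π * |ξ| * ‖𝓕 v ξ‖) := by
          rw [← _root_.sq_abs ξ]; ring
      _ ≤ B := h1
  have hVc : Continuous (𝓕 v) :=
    VectorFourier.fourierIntegral_continuous Real.continuous_fourierChar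
      (by exact continuous_inner) hv_int
  have hVb : ∀ ξ : ℝ, ‖𝓕 v ξ‖ ≤ (A + B) * (1 + ξ ^ 2)⁻¹ := by
    intro ξ
    have h1 := hA ξ
    have h2 := hB ξ
    have hn : 0 ≤ ‖𝓕 v ξ‖ := norm_nonneg _
    have hpos : (0:ℝ) < 1 + ξ ^ 2 := by positivity
    rw [show (A + B) * (1 + ξ ^ 2)⁻¹ = (A + B) / (1 + ξ ^ 2) by ring, le_div_iff₀ hpos]
    have hx2 : ξ ^ 2 * ‖𝓕 v ξ‖ ≤ B := by
      have hπ1 : (1:ℝ) ≤ (2 * π) ^ 2 := by nlinarith [Real.pi_gt_three]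
      have hmm := mul_le_mul_of_nonneg_right hπ1 (mul_nonneg (sq_nonneg ξ) hn)
      nlinarith [h2, hmm]
    nlinarith [h1, hx2]
  have hVint : Integrable (𝓕 v) := by
    refine (integrable_inv_one_add_sq.const_mul (A + B)).mono'
      hVc.aestronglyMeasurable (ae_of_all _ fun ξ => ?_)
    exact hVb ξ
  have hV2int : Integrable (fun ξ : ℝ => ‖𝓕 v ξ‖ ^ 2) := by
    refine (integrable_inv_one_add_sq.const_mul (A * (A + B))).mono'
      ((hVc.norm.pow 2).aestronglyMeasurable) (ae_of_all _ fun ξ => ?_)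
    have h1 := hA ξ
    have h2 := hVb ξ
    have hn : 0 ≤ ‖𝓕 v ξ‖ := norm_nonneg _
    have key : ‖𝓕 v ξ‖ ^ 2 ≤ A * (A + B) * (1 + ξ ^ 2)⁻¹ := by
      have := mul_le_mul h1 h2 hn hA0
      calc ‖𝓕 v ξ‖ ^ 2 = ‖𝓕 v ξ‖ * ‖𝓕 v ξ‖ := by ring
        _ ≤ A * ((A + B) * (1 + ξ ^ 2)⁻¹) := this
        _ = A * (A + B) * (1 + ξ ^ 2)⁻¹ := by ring
    rw [Real.norm_of_nonneg (by positivity)]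
    exact key
  have hinv : 𝓕⁻ (𝓕 v) = v := hv_cont.fourierInv_fourier_eq hv_int hVint
  set V := 𝓕 v with hVdef
  have hkernel : ∀ ξ : ℝ, V ξ = ∫ x : ℝ, Complex.exp (↑(-2 * π * x * ξ) * Complex.I) * v x := by
    intro ξ
    rw [hVdef, Real.fourier_real_eq_integral_exp_smul]
    simp_rw [smul_eq_mul]
  have hFc : Continuous (Function.uncurry fun (ξ x : ℝ) =>
      (starRingEnd ℂ) (V ξ) * (Complex.exp (↑(-2 * π * x * ξ) * Complex.I) * v x)) := by
    apply Continuous.mul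
    · exact Complex.continuous_conj.comp (hVc.comp continuous_fst)
    · apply Continuous.mul
      · exact Complex.continuous_exp.comp
          ((Complex.continuous_ofReal.comp (by fun_prop)).mul continuous_const)
      · exact hv_cont.comp continuous_snd
  have hFint : Integrable (Function.uncurry fun (ξ x : ℝ) =>
      (starRingEnd ℂ) (V ξ) * (Complex.exp (↑(-2 * π * x * ξ) * Complex.I) * v x))
      (volume.prod volume) := by
    refine (hVint.norm.mul_prod hv_int.norm).mono' hFc.aestronglyMeasurable
      (ae_of_all _ fun p => ?_)
    rw [Function.uncurry]
    simp only [norm_mul, RCLike.norm_conj, Complex.norm_exp_ofReal_mul_I, one_mul]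
    exact le_refl _
  have key : (∫ ξ : ℝ, (starRingEnd ℂ) (V ξ) * V ξ) = ∫ x : ℝ, (starRingEnd ℂ) (v x) * v x := by
    calc (∫ ξ : ℝ, (starRingEnd ℂ) (V ξ) * V ξ)
        = ∫ ξ : ℝ, ∫ x : ℝ, (starRingEnd ℂ) (V ξ) *
            (Complex.exp (↑(-2 * π * x * ξ) * Complex.I) * v x) := by
          congr 1; ext ξ
          rw [hkernel ξ]
          exact (integral_const_mul _ _).symm
      _ = ∫ x : ℝ, ∫ ξ : ℝ, (starRingEnd ℂ) (V ξ) *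
            (Complex.exp (↑(-2 * π * x * ξ) * Complex.I) * v x) := integral_integral_swap hFint
      _ = ∫ x : ℝ, (starRingEnd ℂ) (v x) * v x := by
          congr 1; ext x
          have step1 : (∫ ξ : ℝ, (starRingEnd ℂ) (V ξ) *
              (Complex.exp (↑(-2 * π * x * ξ) * Complex.I) * v x))
              = (∫ ξ : ℝ, (starRingEnd ℂ) (V ξ * Complex.exp (↑(2 * π * x * ξ) * Complex.I))) * v x := by
            rw [← integral_mul_const]
            congr 1; ext ξ
            rw [map_mul, ← Complex.exp_conj]
            have : (starRingEnd ℂ) (↑(2 * π * x * ξ) * Complex.I) = ↑(-2 * π * x * ξ) * Complex.I := by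
              rw [map_mul, Complex.conj_I, Complex.conj_ofReal]
              push_cast; ring
            rw [this]; ring
          rw [step1, integral_conj]
          have step2 : (∫ ξ : ℝ, V ξ * Complex.exp (↑(2 * π * x * ξ) * Complex.I)) = 𝓕⁻ V x := by
            rw [Real.fourierInv_eq']
            congr 1; ext ξ
            rw [smul_eq_mul, mul_comm]
            congr 2
            simp [RCLike.inner_apply]
            ring
          rw [step2, hVdef, hinv]
  have lhs_eq : (∫ ξ : ℝ, (starRingEnd ℂ) (V ξ) * V ξ) = ((∫ ξ : ℝ, ‖V ξ‖ ^ 2 : ℝ) : ℂ) := by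
    have h1 : (fun ξ : ℝ => (starRingEnd ℂ) (V ξ) * V ξ) = fun ξ : ℝ => ((‖V ξ‖ ^ 2 : ℝ) : ℂ) := by
      funext ξ
      rw [mul_comm, Complex.mul_conj]
      norm_cast
      rw [Complex.normSq_eq_norm_sq]
    rw [h1]
    exact integral_ofReal
  have rhs_eq : (∫ x : ℝ, (starRingEnd ℂ) (v x) * v x) = ((∫ x : ℝ, ‖v x‖ ^ 2 : ℝ) : ℂ) := by
    have h1 : (fun x : ℝ => (starRingEnd ℂ) (v x) * v x) = fun x : ℝ => ((‖v x‖ ^ 2 : ℝ) : ℂ) := by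
      funext x
      rw [mul_comm, Complex.mul_conj]
      norm_cast
      rw [Complex.normSq_eq_norm_sq]
    rw [h1]
    exact integral_ofReal
  refine ⟨hV2int, ?_⟩
  have := lhs_eq.symm.trans (key.trans rhs_eq)
  exact_mod_cast this

/-- For `α ∈ (0,1/2)`, `L²(Ω)` is continuously embedded into `H₀^{-α}(Ω)` on a bounded
interval `Ω = (a,b)`, with constant depending only on `α` and the length `b - a`. -/
theorem L2_embedding_Hneg (α L : ℝ) (hα : α ∈ Set.Ioo (0 : ℝ) (1 / 2)) (hL : 0 < L) :
    ∃ C : ℝ, 0 < C ∧ ∀ a b : ℝ, b - a = L →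
      ∀ u : ℝ → ℝ, ContDiff ℝ (⊤ : ℕ∞) u → HasCompactSupport u →
        tsupport u ⊆ Set.Ioo a b →
        HnegNorm α u ≤ C * Real.sqrt (∫ x in a..b, (u x) ^ 2) := by
  obtain ⟨hα0, hα2⟩ := hα
  have hs : (-1:ℝ) < -(2*α) := by linarith
  have hs0 : -(2*α) ≤ 0 := by linarith
  -- integrability of |ω|^(-2α) near 0
  have h01 : IntervalIntegrable (fun ω : ℝ => |ω| ^ (-(2*α))) volume 0 1 := by
    have h := intervalIntegral.intervalIntegrable_rpow' (a := 0) (b := 1) hs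
    rw [intervalIntegrable_iff] at h ⊢
    refine h.congr_fun ?_ measurableSet_uIoc
    intro x hx
    rw [Set.uIoc_of_le (by norm_num : (0:ℝ) ≤ 1)] at hx
    show x ^ (-(2*α)) = |x| ^ (-(2*α))
    rw [abs_of_pos hx.1]
  have hneg : IntervalIntegrable (fun ω : ℝ => |ω| ^ (-(2*α))) volume (-1) 0 := by
    have h2 := (IntervalIntegrable.iff_comp_neg
      (f := fun ω : ℝ => |ω| ^ (-(2*α))) (a := 1) (b := 0)).mp h01.symm
    simp only [abs_neg, neg_zero] at h2
    exact h2
  have hJint : IntegrableOn (fun ω : ℝ => |ω| ^ (-(2*α))) (Set.Ioo (-1:ℝ) 1) := by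
    have h := hneg.trans h01
    rw [intervalIntegrable_iff, Set.uIoc_of_le (by norm_num : (-1:ℝ) ≤ 1)] at h
    exact h.mono_set Set.Ioo_subset_Ioc_self
  set J := ∫ ω in Set.Ioo (-1:ℝ) 1, |ω| ^ (-(2*α)) with hJdef
  have hJ0 : 0 ≤ J :=
    setIntegral_nonneg measurableSet_Ioo fun ω _ => Real.rpow_nonneg (abs_nonneg ω) _
  refine ⟨Real.sqrt (L * J + 2 * π), Real.sqrt_pos.mpr
    (by nlinarith [Real.pi_pos, mul_nonneg hL.le hJ0]), ?_⟩
  intro a b hab u hu hcs hsub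
  have hab' : a < b := by linarith
  set Q := ∫ x in a..b, u x ^ 2 with hQdef
  have hQIoc : Q = ∫ x in Set.Ioc a b, u x ^ 2 := intervalIntegral.integral_of_le hab'.le
  have hzero : ∀ x ∉ Set.Ioc a b, u x = 0 := by
    intro x hx
    by_contra h
    exact hx (Set.Ioo_subset_Ioc_self (hsub (subset_tsupport u h)))
  have hQglob : ∫ x : ℝ, u x ^ 2 = Q := by
    rw [hQIoc]
    exact (setIntegral_eq_integral_of_forall_compl_eq_zero fun x hx => by
      rw [hzero x hx]; ring).symm
  have hQ0 : 0 ≤ Q := by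
    rw [hQIoc]
    exact setIntegral_nonneg measurableSet_Ioc fun x _ => sq_nonneg _
  -- Cauchy-Schwarz bound M
  set M := Real.sqrt L * Real.sqrt Q with hMdef
  have hu2glob : Integrable (fun x : ℝ => u x ^ 2) := by
    have hc : Continuous fun x : ℝ => u x ^ 2 := (hu.continuous).pow 2
    exact hc.integrable_of_hasCompactSupport
      (hcs.comp_left (g := fun t : ℝ => t ^ 2) (by norm_num))
  have hM : ∀ ω : ℝ, ‖fourierT u ω‖ ≤ M := by
    intro ω
    haveI : IsFiniteMeasure (volume.restrict (Set.Ioc a b)) :=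
      ⟨by rw [Measure.restrict_apply_univ]; simp [Real.volume_Ioc]⟩
    have hpq : Real.HolderConjugate 2 2 := Real.HolderConjugate.two_two
    have habs2 : MemLp (fun x : ℝ => |u x|) (ENNReal.ofReal 2)
        (volume.restrict (Set.Ioc a b)) := by
      rw [ENNReal.ofReal_ofNat]
      refine (memLp_two_iff_integrable_sq
        ((hu.continuous.abs).aestronglyMeasurable)).mpr ?_
      have := hu2glob.restrict (s := Set.Ioc a b)
      simpa [_root_.sq_abs] using this
    have hone : MemLp (fun _ : ℝ => (1:ℝ)) (ENNReal.ofReal 2)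
        (volume.restrict (Set.Ioc a b)) := by
      rw [ENNReal.ofReal_ofNat]; exact memLp_const 1
    have hCS := integral_mul_le_Lp_mul_Lq_of_nonneg hpq
      (ae_of_all _ fun x => abs_nonneg (u x)) (ae_of_all _ fun _ => zero_le_one) habs2 hone
    have e1 : ∫ x in Set.Ioc a b, |u x| ^ (2:ℝ) = Q := by
      rw [hQIoc]
      congr 1; funext x
      rw [show (2:ℝ) = ((2:ℕ):ℝ) by norm_num, Real.rpow_natCast, _root_.sq_abs]
    have e2 : ∫ x in Set.Ioc a b, (1:ℝ) ^ (2:ℝ) = L := by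
      simp only [Real.one_rpow]
      rw [setIntegral_const, measureReal_def, Real.volume_Ioc, smul_eq_mul, mul_one,
        ENNReal.toReal_ofReal (by linarith : (0:ℝ) ≤ b - a), hab]
    calc ‖fourierT u ω‖ ≤ ∫ x : ℝ, |u x| := fourierT_norm_le u ω
      _ = ∫ x in Set.Ioc a b, |u x| :=
          (setIntegral_eq_integral_of_forall_compl_eq_zero fun x hx => by
            rw [hzero x hx, abs_zero]).symm
      _ = ∫ x in Set.Ioc a b, |u x| * 1 := by simp
      _ ≤ (∫ x in Set.Ioc a b, |u x| ^ (2:ℝ)) ^ (1/(2:ℝ)) *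
            (∫ x in Set.Ioc a b, (1:ℝ) ^ (2:ℝ)) ^ (1/(2:ℝ)) := hCS
      _ = M := by
          rw [e1, e2, hMdef, ← Real.sqrt_eq_rpow, ← Real.sqrt_eq_rpow, mul_comm]
  -- Plancherel
  have hv_sm : ContDiff ℝ (⊤:ℕ∞) (fun x : ℝ => (u x : ℂ)) :=
    Complex.ofRealCLM.contDiff.comp (hu.of_le (by simp))
  have hv_cs : HasCompactSupport (fun x : ℝ => (u x : ℂ)) :=
    hcs.comp_left (g := Complex.ofReal) Complex.ofReal_zero
  obtain ⟨hV2int, hPl⟩ := plancherel_smooth (fun x : ℝ => (u x : ℂ)) hv_sm hv_cs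
  have hPl' : (∫ ξ : ℝ, ‖𝓕 (fun x : ℝ => (u x : ℂ)) ξ‖ ^ 2) = Q := by
    calc (∫ ξ : ℝ, ‖𝓕 (fun x : ℝ => (u x : ℂ)) ξ‖ ^ 2)
        = ∫ x : ℝ, ‖((u x : ℂ))‖ ^ 2 := hPl
      _ = ∫ x : ℝ, u x ^ 2 := by
          congr 1; funext x
          rw [Complex.norm_real, Real.norm_eq_abs, _root_.sq_abs]
      _ = Q := hQglob
  have h2π : (2*π) ≠ 0 := by positivity
  have huhat2int : Integrable (fun ω : ℝ => ‖fourierT u ω‖ ^ 2) := by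
    have h := hV2int.comp_div (R := 2*π) h2π
    exact h.congr (ae_of_all _ fun ω => by simp only [aux_fourierT_eq])
  have huhatval : ∫ ω : ℝ, ‖fourierT u ω‖ ^ 2 = 2*π*Q := by
    calc ∫ ω : ℝ, ‖fourierT u ω‖ ^ 2
        = ∫ ω : ℝ, ‖𝓕 (fun x : ℝ => (u x : ℂ)) (ω/(2*π))‖ ^ 2 := by
          congr 1; funext ω; rw [aux_fourierT_eq]
      _ = |2*π| • ∫ ξ : ℝ, ‖𝓕 (fun x : ℝ => (u x : ℂ)) ξ‖ ^ 2 :=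
          MeasureTheory.Measure.integral_comp_div (fun ξ : ℝ => ‖𝓕 (fun x : ℝ => (u x : ℂ)) ξ‖ ^ 2) (2*π)
      _ = 2*π*Q := by rw [hPl', smul_eq_mul, abs_of_pos (by positivity)]
  -- dominating function
  set h : ℝ → ℝ := fun ω =>
    (Set.Ioo (-1:ℝ) 1).indicator (fun ω => M^2 * |ω| ^ (-(2*α))) ω + ‖fourierT u ω‖ ^ 2 with hhdef
  have hhint : Integrable h :=
    (IntegrableOn.integrable_indicator (hJint.const_mul (M^2)) measurableSet_Ioo).add huhat2int
  have hpt : ∀ ω : ℝ, |ω| ^ (-(2*α)) * ‖fourierT u ω‖ ^ 2 ≤ h ω := by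
    intro ω
    rw [hhdef]
    by_cases hcase : ω ∈ Set.Ioo (-1:ℝ) 1
    · simp only [Set.indicator_of_mem hcase]
      have h1 : ‖fourierT u ω‖ ^ 2 ≤ M ^ 2 :=
        pow_le_pow_left₀ (norm_nonneg _) (hM ω) 2
      have h2 : (0:ℝ) ≤ |ω| ^ (-(2*α)) := Real.rpow_nonneg (abs_nonneg ω) _
      nlinarith [sq_nonneg ‖fourierT u ω‖, mul_le_mul_of_nonneg_left h1 h2]
    · simp only [Set.indicator_of_notMem hcase, zero_add]
      have h1 : (1:ℝ) ≤ |ω| := by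
        rcases not_and_or.mp (Set.mem_Ioo.not.mp hcase) with hc | hc
        · push_neg at hc; exact le_abs.mpr (Or.inr (by linarith))
        · push_neg at hc; exact le_abs.mpr (Or.inl hc)
      have h2 : |ω| ^ (-(2*α)) ≤ 1 := Real.rpow_le_one_of_one_le_of_nonpos h1 hs0
      calc |ω| ^ (-(2*α)) * ‖fourierT u ω‖ ^ 2 ≤ 1 * ‖fourierT u ω‖ ^ 2 :=
            mul_le_mul_of_nonneg_right h2 (sq_nonneg _)
        _ = ‖fourierT u ω‖ ^ 2 := one_mul _
  have hIle : (∫ ω : ℝ, |ω| ^ (-(2*α)) * ‖fourierT u ω‖ ^ 2) ≤ ∫ ω : ℝ, h ω :=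
    integral_mono_of_nonneg
      (ae_of_all _ fun ω => mul_nonneg (Real.rpow_nonneg (abs_nonneg ω) _) (sq_nonneg _))
      hhint (ae_of_all _ hpt)
  have hinth : ∫ ω : ℝ, h ω = M^2 * J + 2*π*Q := by
    rw [hhdef]
    rw [integral_add (IntegrableOn.integrable_indicator (hJint.const_mul (M^2)) measurableSet_Ioo) huhat2int,
      integral_indicator measurableSet_Ioo, integral_const_mul, huhatval, hJdef]
  have hM2 : M^2 = L * Q := by
    rw [hMdef, mul_pow, Real.sq_sqrt hL.le, Real.sq_sqrt hQ0]
  -- final assembly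
  unfold HnegNorm
  calc Real.sqrt (∫ ω : ℝ, |ω| ^ (-(2*α)) * ‖fourierT u ω‖ ^ 2)
      ≤ Real.sqrt ((L * J + 2*π) * Q) := by
        apply Real.sqrt_le_sqrt
        calc (∫ ω : ℝ, |ω| ^ (-(2*α)) * ‖fourierT u ω‖ ^ 2) ≤ ∫ ω : ℝ, h ω := hIle
          _ = M^2 * J + 2*π*Q := hinth
          _ = (L * J + 2*π) * Q := by rw [hM2]; ring
    _ = Real.sqrt (L * J + 2*π) * Real.sqrt Q :=
        Real.sqrt_mul (by nlinarith [Real.pi_pos, mul_nonneg hL.le hJ0]) Q
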